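/- The lattice correlation length function ξ(z) = √(z(1 − z²)) / |z² + 2z − 1| is strictly monotonically increasing on the interval (0, √2 − 1). Consequently, the renormalization group transformation in the single-coupling truncation of the 2d Ising model, which is generated by solving the renormalization prescription a_m ξ(z_m) = ξ_phys, is invertible. -/

import Mathlib

/-!
On the subcritical interval `z² + 2z − 1 = (z + 1)² − 2` is negative, so
`ξ(z) = √(z − z³) / (1 − 2z − z²)`. There the numerator `z − z³` is positive and increasing
on `[-1/2, 1/2] ⊇ (0, √2 − 1)`, since `(y − y³) − (x − x³) = (y − x)(1 − x² − xy − y²)`, while the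
denominator is positive and decreasing, so the quotient is strictly increasing.
-/

/-- The lattice correlation length of the 2d Ising model as a function of
`z = tanh(β)`: `ξ(z) = √(z(1 − z²)) / |z² + 2z − 1|`. -/
noncomputable def isingCorrLength (z : ℝ) : ℝ :=
  Real.sqrt (z * (1 - z ^ 2)) / |z ^ 2 + 2 * z - 1|

open Set

lemma sqrt_two_sub_one_lt_half : Real.sqrt 2 - 1 < 1 / 2 := by
  have h : Real.sqrt 2 < 3 / 2 := by
    rw [Real.sqrt_lt' (by norm_num)]
    norm_num
  linarith

lemma sq_add_two_mul_sub_one_neg {z : ℝ} (h₀ : -1 ≤ z) (h₁ : z < Real.sqrt 2 - 1) :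
    z ^ 2 + 2 * z - 1 < 0 := by
  have hsq : (z + 1) ^ 2 < Real.sqrt 2 ^ 2 :=
    pow_lt_pow_left₀ (by linarith) (by linarith) two_ne_zero
  rw [Real.sq_sqrt zero_le_two] at hsq
  linarith

lemma strictMonoOn_mul_one_sub_sq :
    StrictMonoOn (fun z : ℝ => z * (1 - z ^ 2)) (Icc (-1 / 2) (1 / 2)) := by
  rintro x ⟨hx₀, hx₁⟩ y ⟨hy₀, hy₁⟩ hxy
  have hfactor : y * (1 - y ^ 2) - x * (1 - x ^ 2) =
      (y - x) * (1 - (x ^ 2 + x * y + y ^ 2)) := by ring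
  have hquad : x ^ 2 + x * y + y ^ 2 < 1 := by nlinarith
  have := mul_pos (sub_pos.mpr hxy) (sub_pos.mpr hquad)
  simp only
  linarith

lemma strictAntiOn_one_sub_two_mul_sub_sq :
    StrictAntiOn (fun z : ℝ => 1 - 2 * z - z ^ 2) (Ici (-1)) := by
  rintro x hx y - hxy
  simp only [mem_Ici] at hx
  nlinarith

lemma isingCorrLength_eq_of_mem_Ioo {z : ℝ} (hz : z ∈ Ioo 0 (Real.sqrt 2 - 1)) :
    isingCorrLength z = Real.sqrt (z * (1 - z ^ 2)) / (1 - 2 * z - z ^ 2) := by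
  rw [isingCorrLength, abs_of_neg (sq_add_two_mul_sub_one_neg (by linarith [hz.1]) hz.2)]
  ring_nf

/-- The lattice correlation length `ξ(z)` is strictly monotonically increasing on the
subcritical interval `(0, √2 − 1)`; consequently the renormalization group
transformation in the single-coupling truncation is invertible. -/
theorem isingCorrLength_strictMonoOn :
    StrictMonoOn isingCorrLength (Set.Ioo 0 (Real.sqrt 2 - 1)) := by
  intro x hx y hy hxy
  have hhalf := sqrt_two_sub_one_lt_half
  have hxI : x ∈ Icc (-1 / 2 : ℝ) (1 / 2) := ⟨by linarith [hx.1], by linarith [hx.2]⟩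
  have hyI : y ∈ Icc (-1 / 2 : ℝ) (1 / 2) := ⟨by linarith [hy.1], by linarith [hy.2]⟩
  have hnum : x * (1 - x ^ 2) < y * (1 - y ^ 2) := strictMonoOn_mul_one_sub_sq hxI hyI hxy
  have hden : 1 - 2 * y - y ^ 2 < 1 - 2 * x - x ^ 2 :=
    strictAntiOn_one_sub_two_mul_sub_sq (by simp only [mem_Ici]; linarith [hx.1])
      (by simp only [mem_Ici]; linarith [hy.1]) hxy
  have hden_pos : 0 < 1 - 2 * y - y ^ 2 := by
    linarith [sq_add_two_mul_sub_one_neg (by linarith [hy.1]) hy.2]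
  have hnum_nonneg : 0 ≤ x * (1 - x ^ 2) := mul_nonneg hx.1.le (by nlinarith [hxI.1, hxI.2])
  rw [isingCorrLength_eq_of_mem_Ioo hx, isingCorrLength_eq_of_mem_Ioo hy]
  exact div_lt_div₀ (Real.sqrt_lt_sqrt hnum_nonneg hnum) hden.le (Real.sqrt_nonneg _) hden_pos
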